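/- arXiv:1404.0153 — 2 statements merged into one kernel-verified Lean document; each statement's English description precedes it below -/
import Mathlib

section
/- Let C = (C(k))_{k≥0} be a cosimplicial chain complex of real vector spaces, and suppose that for every k ≥ 0 the chain map C(k)_* → C(0)_* induced by the cosimplicial structure (the composite of codegeneracy maps corresponding to the unique morphism [k] → [0] in the simplex category) is a quasi-isomorphism. Then the projection pr₀ : C̃_* → C(0)_*, (x_k)_{k≥0} ↦ x₀, from the total complex is a quasi-isomorphism. -/
/-!
Since every `C(k) → C(0)` is a quasi-isomorphism and all cofaces agree after composing down to
`C(0)`, the alternating coface sum `δ_k` acts on `H(C(0))` as `0` for `k` even and as the identity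
for `k` odd. A primitive `y` of a total cycle `x` with prescribed `∂ y₀ = x₀` is built column by
column: the residual `x_{k+1} + (-1)^n δ_k y_k` is a cycle whose image in `C(0)` bounds, hence it
has a primitive `y_{k+1}`; when `k` is even this primitive is corrected by a cycle so that the
next residual again bounds in `C(0)`. For surjectivity, apply this to the total boundary of a
cycle of `C(0)` extended by zero, with primitive vanishing in column `0`.
-/

/-- A cosimplicial chain complex of real vector spaces: chain complexes `C(k)` with
graded pieces `X k p`, cofaces `δ^i : C(k) → C(k+1)` (written `dl k i`, meaningful for
`0 ≤ i ≤ k+1` and recorded with flexible target degree, vanishing unless the degree is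
preserved) and codegeneracies `σ^i : C(k+1) → C(k)` (written `sg k i`, meaningful for
`0 ≤ i ≤ k`), all chain maps, satisfying the cosimplicial identities. -/
structure CosimplicialChainComplex : Type 1 where
  X : ℕ → ℤ → Type
  [instAddCommGroup : ∀ k p, AddCommGroup (X k p)]
  [instModule : ∀ k p, Module ℝ (X k p)]
  d : ∀ (k : ℕ) (p q : ℤ), X k p →ₗ[ℝ] X k q
  d_support : ∀ (k : ℕ) (p q : ℤ) (x : X k p), q ≠ p - 1 → d k p q x = 0
  d_sq : ∀ (k : ℕ) (p q r : ℤ) (x : X k p), d k q r (d k p q x) = 0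
  dl : ∀ (k i : ℕ) (p r : ℤ), X k p →ₗ[ℝ] X (k + 1) r
  dl_support : ∀ (k i : ℕ) (p r : ℤ) (x : X k p), r ≠ p → dl k i p r x = 0
  dl_chain : ∀ (k i : ℕ) (p q : ℤ) (x : X k p),
    dl k i q q (d k p q x) = d (k + 1) p q (dl k i p p x)
  sg : ∀ (k i : ℕ) (p : ℤ), X (k + 1) p →ₗ[ℝ] X k p
  sg_chain : ∀ (k i : ℕ) (p q : ℤ) (x : X (k + 1) p),
    sg k i q (d (k + 1) p q x) = d k p q (sg k i p x)
  dl_dl : ∀ (k i j : ℕ) (p : ℤ) (x : X k p), i < j → j ≤ k + 2 →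
    dl (k + 1) j p p (dl k i p p x) = dl (k + 1) i p p (dl k (j - 1) p p x)
  sg_sg : ∀ (k i j : ℕ) (p : ℤ) (x : X (k + 2) p), i ≤ j → j ≤ k →
    sg k j p (sg (k + 1) i p x) = sg k i p (sg (k + 1) (j + 1) p x)
  sg_dl_lt : ∀ (k i j : ℕ) (p : ℤ) (x : X (k + 1) p), i < j → j ≤ k + 1 →
    sg (k + 1) j p (dl (k + 1) i p p x) = dl k i p p (sg k (j - 1) p x)
  sg_dl_self : ∀ (k j : ℕ) (p : ℤ) (x : X k p), j ≤ k →
    sg k j p (dl k j p p x) = x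
  sg_dl_succ : ∀ (k j : ℕ) (p : ℤ) (x : X k p), j ≤ k →
    sg k j p (dl k (j + 1) p p x) = x
  sg_dl_gt : ∀ (k i j : ℕ) (p : ℤ) (x : X (k + 1) p), j + 1 < i → i ≤ k + 2 → j ≤ k →
    sg (k + 1) j p (dl (k + 1) i p p x) = dl k (i - 1) p p (sg k j p x)

attribute [instance] CosimplicialChainComplex.instAddCommGroup
  CosimplicialChainComplex.instModule

namespace CosimplicialChainComplex

def IsCycle (C : CosimplicialChainComplex) (k : ℕ) (q : ℤ) (x : C.X k q) : Prop :=
  C.d k q (q - 1) x = 0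

def IsBoundary (C : CosimplicialChainComplex) (k : ℕ) (q : ℤ) (x : C.X k q) : Prop :=
  ∃ y : C.X k (q + 1), C.d k (q + 1) q y = x

/-- The composite of codegeneracy maps `C(k) → C(0)` corresponding to the unique
morphism `[k] → [0]` of the simplex category. -/
def toZero (C : CosimplicialChainComplex) : ∀ (k : ℕ) (p : ℤ), C.X k p → C.X 0 p
  | 0, _ => fun x => x
  | (j + 1), p => fun x => C.toZero j p (C.sg j 0 p x)

/-- The total complex `C̃_n = ∏_{k ≥ 0} C(k)_{n+k}`. -/
def Tot (C : CosimplicialChainComplex) (n : ℤ) : Type := ∀ k : ℕ, C.X k (n + (k : ℤ))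

instance (C : CosimplicialChainComplex) (n : ℤ) : AddCommGroup (C.Tot n) :=
  inferInstanceAs (AddCommGroup (∀ k : ℕ, C.X k (n + (k : ℤ))))

instance (C : CosimplicialChainComplex) (n : ℤ) : Module ℝ (C.Tot n) :=
  inferInstanceAs (Module ℝ (∀ k : ℕ, C.X k (n + (k : ℤ))))

/-- The total differential `(∂̃ x)_k = ∂ x_k + δ_k (x_{k-1})`, where
`δ_k x := (−1)^{|x|+k−1} ∑_{i=0}^k (−1)^i δ_{k,i} x`. -/
noncomputable def totD (C : CosimplicialChainComplex) (n m : ℤ) (x : C.Tot n) :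
    C.Tot m := fun k =>
  C.d k (n + (k : ℤ)) (m + (k : ℤ)) (x k) +
    (match k with
      | 0 => 0
      | (j + 1) =>
          (-1 : ℝ) ^ ((n + (j : ℤ)) + ((j : ℤ) + 1) - 1) •
            ∑ i ∈ Finset.range (j + 2),
              (-1 : ℝ) ^ i • C.dl j i (n + (j : ℤ)) (m + ((j + 1 : ℕ) : ℤ)) (x j))

end CosimplicialChainComplex

theorem exists_seq_of_forall_exists {α : ℕ → Type*} (P : ∀ k, α k → Prop)
    (R : ∀ k, α k → α (k + 1) → Prop) (a₀ : α 0) (h₀ : P 0 a₀)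
    (step : ∀ k a, P k a → ∃ b, R k a b ∧ P (k + 1) b) :
    ∃ f : ∀ k, α k, f 0 = a₀ ∧ ∀ k, R k (f k) (f (k + 1)) := by
  choose next hnext using step
  let g : ∀ k, {a : α k // P k a} := fun k =>
    Nat.rec ⟨a₀, h₀⟩ (fun k a => ⟨next k a.1 a.2, (hnext k a.1 a.2).2⟩) k
  exact ⟨fun k => (g k).1, rfl, fun k => (hnext k (g k).1 (g k).2).1⟩

namespace CosimplicialChainComplex

variable (C : CosimplicialChainComplex)

def degreeCast {k : ℕ} {p q : ℤ} (h : p = q) : C.X k p →ₗ[ℝ] C.X k q :=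
  h ▸ LinearMap.id

@[simp]
lemma degreeCast_rfl {k : ℕ} {p : ℤ} (v : C.X k p) : C.degreeCast rfl v = v := rfl

@[simp]
lemma degreeCast_degreeCast {k : ℕ} {p q r : ℤ} (h : p = q) (h' : q = r) (v : C.X k p) :
    C.degreeCast h' (C.degreeCast h v) = C.degreeCast (h.trans h') v := by
  subst h h'; rfl

lemma d_degreeCast {k : ℕ} {p q r : ℤ} (h : q = p) (v : C.X k q) :
    C.d k p r (C.degreeCast h v) = C.d k q r v := by
  subst h; rfl

lemma isCycle_iff {k : ℕ} {q r : ℤ} (h : q = r + 1) (v : C.X k q) :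
    C.IsCycle k q v ↔ C.d k q r v = 0 := by
  subst h; rw [IsCycle, add_sub_cancel_right]

lemma isBoundary_iff {k : ℕ} {p q : ℤ} (h : p = q + 1) (v : C.X k q) :
    C.IsBoundary k q v ↔ ∃ y : C.X k p, C.d k p q y = v := by
  subst h; rfl

lemma isBoundary_zero (k : ℕ) (q : ℤ) : C.IsBoundary k q 0 := ⟨0, map_zero _⟩

lemma IsBoundary.smul {C : CosimplicialChainComplex} {k : ℕ} {q : ℤ} {v : C.X k q}
    (hv : C.IsBoundary k q v) (c : ℝ) : C.IsBoundary k q (c • v) := by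
  obtain ⟨y, rfl⟩ := hv
  exact ⟨c • y, map_smul _ _ _⟩

/-- `∑ (-1)^i δ^i`, with flexible target degree like `dl`: it vanishes unless `r = p`. -/
noncomputable def alternatingCoface (k : ℕ) (p r : ℤ) : C.X k p →ₗ[ℝ] C.X (k + 1) r :=
  ∑ i ∈ Finset.range (k + 2), (-1 : ℝ) ^ i • C.dl k i p r

lemma alternatingCoface_apply (k : ℕ) (p r : ℤ) (v : C.X k p) :
    C.alternatingCoface k p r v = ∑ i ∈ Finset.range (k + 2), (-1 : ℝ) ^ i • C.dl k i p r v := by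
  simp [alternatingCoface]

lemma alternatingCoface_of_ne {k : ℕ} {p r : ℤ} (h : r ≠ p) (v : C.X k p) :
    C.alternatingCoface k p r v = 0 := by
  simp [alternatingCoface_apply, C.dl_support _ _ _ _ _ h]

lemma alternatingCoface_degreeCast {k : ℕ} {p q r : ℤ} (h : q = p) (v : C.X k q) :
    C.alternatingCoface k p r (C.degreeCast h v) = C.alternatingCoface k q r v := by
  subst h; rfl

lemma d_alternatingCoface {k : ℕ} {p q r s : ℤ} (hr : r = p) (hs : s = q) (v : C.X k p) :
    C.d (k + 1) r s (C.alternatingCoface k p r v) = C.alternatingCoface k q s (C.d k p q v) := by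
  subst hr hs
  simp [alternatingCoface_apply, C.dl_chain]

lemma alternatingCoface_alternatingCoface_self (k : ℕ) (p : ℤ) (v : C.X k p) :
    C.alternatingCoface (k + 1) p p (C.alternatingCoface k p p v) = 0 := by
  simp only [alternatingCoface_apply, map_sum, map_smul, Finset.smul_sum, smul_smul, ← pow_add]
  rw [← Finset.sum_product']
  -- `δ^j δ^i = δ^i δ^(j-1)` for `i < j` pairs off the terms with opposite signs
  refine Finset.sum_involution
    (fun ij _ => if ij.2 ≤ ij.1 then (ij.2, ij.1 + 1) else (ij.2 - 1, ij.1)) ?_ ?_ ?_ ?_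
  · rintro ⟨i, j⟩ hij
    simp only [Finset.mem_product, Finset.mem_range] at hij
    dsimp only
    split_ifs with hle
    · rw [C.dl_dl k j (i + 1) p v (by omega) (by omega), Nat.add_sub_cancel,
        show j + (i + 1) = (i + j) + 1 by omega, pow_succ, mul_neg_one, neg_smul, add_neg_cancel]
    · rw [C.dl_dl k i j p v (by omega) (by omega),
        show i + j = (j - 1 + i) + 1 by omega, pow_succ, mul_neg_one, neg_smul, neg_add_cancel]
  · rintro ⟨i, j⟩ _ _
    dsimp only
    split_ifs <;> simp only [ne_eq, Prod.mk.injEq, not_and] <;> omega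
  · rintro ⟨i, j⟩ hij
    simp only [Finset.mem_product, Finset.mem_range] at hij ⊢
    split_ifs <;> omega
  · rintro ⟨i, j⟩ _
    dsimp only
    split_ifs with h₁ h₂ h₂ <;> simp only [Prod.mk.injEq, and_true, true_and] at h₂ ⊢ <;> omega

lemma alternatingCoface_alternatingCoface (k : ℕ) (p r s : ℤ) (v : C.X k p) :
    C.alternatingCoface (k + 1) r s (C.alternatingCoface k p r v) = 0 := by
  by_cases hr : r = p
  · subst hr
    by_cases hs : s = r
    · subst hs
      exact C.alternatingCoface_alternatingCoface_self k s v
    · exact C.alternatingCoface_of_ne hs _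
  · rw [C.alternatingCoface_of_ne hr, map_zero]

lemma toZero_add (k : ℕ) (p : ℤ) (v w : C.X k p) :
    C.toZero k p (v + w) = C.toZero k p v + C.toZero k p w := by
  induction k with
  | zero => rfl
  | succ k ih => simp only [toZero, map_add, ih]

lemma toZero_smul (k : ℕ) (p : ℤ) (c : ℝ) (v : C.X k p) :
    C.toZero k p (c • v) = c • C.toZero k p v := by
  induction k with
  | zero => rfl
  | succ k ih => simp only [toZero, map_smul, ih]

def toZeroₗ (k : ℕ) (p : ℤ) : C.X k p →ₗ[ℝ] C.X 0 p where
  toFun := C.toZero k p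
  map_add' := C.toZero_add k p
  map_smul' := C.toZero_smul k p

@[simp]
lemma toZeroₗ_apply (k : ℕ) (p : ℤ) (v : C.X k p) : C.toZeroₗ k p v = C.toZero k p v := rfl

lemma toZero_sub (k : ℕ) (p : ℤ) (v w : C.X k p) :
    C.toZero k p (v - w) = C.toZero k p v - C.toZero k p w := by
  simpa using map_sub (C.toZeroₗ k p) v w

lemma toZero_neg (k : ℕ) (p : ℤ) (v : C.X k p) : C.toZero k p (-v) = -C.toZero k p v := by
  simpa using map_neg (C.toZeroₗ k p) v

lemma toZero_d (k : ℕ) (p q : ℤ) (v : C.X k p) :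
    C.toZero k q (C.d k p q v) = C.d 0 p q (C.toZero k p v) := by
  induction k with
  | zero => rfl
  | succ k ih => simp only [toZero, C.sg_chain, ih]

/-- All composites `[k] → [k + 1] → [0]` in the simplex category agree. -/
lemma toZero_dl {k i : ℕ} (hi : i ≤ k + 1) (p : ℤ) (v : C.X k p) :
    C.toZero (k + 1) p (C.dl k i p p v) = C.toZero k p v := by
  induction k generalizing i with
  | zero =>
    obtain rfl | rfl : i = 0 ∨ i = 1 := by omega
    · exact C.sg_dl_self 0 0 p v le_rfl
    · exact C.sg_dl_succ 0 0 p v le_rfl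
  | succ k ih =>
    show C.toZero (k + 1) p (C.sg (k + 1) 0 p (C.dl (k + 1) i p p v)) = C.toZero (k + 1) p v
    match i, hi with
    | 0, _ => rw [C.sg_dl_self (k + 1) 0 p v (by omega)]
    | 1, _ => rw [C.sg_dl_succ (k + 1) 0 p v (by omega)]
    | i + 2, hi =>
      rw [C.sg_dl_gt k (i + 2) 0 p v (by omega) (by omega) (by omega), ih (by omega)]
      rfl

lemma toZero_alternatingCoface (k : ℕ) (p : ℤ) (v : C.X k p) :
    C.toZero (k + 1) p (C.alternatingCoface k p p v) = if Even k then 0 else C.toZero k p v := by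
  rw [alternatingCoface_apply, ← toZeroₗ_apply, map_sum,
    Finset.sum_congr rfl fun i hi => by
      rw [map_smul, toZeroₗ_apply, C.toZero_dl (Finset.mem_range_succ_iff.mp hi)],
    ← Finset.sum_smul, neg_one_geom_sum]
  split_ifs <;> simp_all [Nat.even_add]

lemma Tot.sub_apply {n : ℤ} (x y : C.Tot n) (k : ℕ) : (x - y) k = x k - y k := rfl

lemma totD_apply_zero {n : ℤ} (m : ℤ) (x : C.Tot n) :
    C.totD n m x 0 = C.d 0 (n + ((0 : ℕ) : ℤ)) (m + ((0 : ℕ) : ℤ)) (x 0) :=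
  add_zero _

lemma totD_apply_succ {n : ℤ} (m : ℤ) (x : C.Tot n) (k : ℕ) :
    C.totD n m x (k + 1) = C.d (k + 1) (n + ((k + 1 : ℕ) : ℤ)) (m + ((k + 1 : ℕ) : ℤ)) (x (k + 1))
      + (-1 : ℝ) ^ n • C.alternatingCoface k (n + k) (m + ((k + 1 : ℕ) : ℤ)) (x k) := by
  have hsign : (-1 : ℝ) ^ (n + k + (k + 1) - 1) = (-1) ^ n := by
    rw [show n + k + (k + 1) - 1 = n + 2 * k by ring, zpow_add₀ (by norm_num),
      (even_two_mul (k : ℤ)).neg_one_zpow, mul_one]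
  rw [totD, hsign, alternatingCoface_apply]

lemma totD_sub {n : ℤ} (m : ℤ) (x y : C.Tot n) :
    C.totD n m (x - y) = C.totD n m x - C.totD n m y := by
  funext k
  show C.totD n m (x - y) k = C.totD n m x k - C.totD n m y k
  cases k with
  | zero => rw [totD_apply_zero, totD_apply_zero, totD_apply_zero, Tot.sub_apply, map_sub]
  | succ k =>
    rw [totD_apply_succ, totD_apply_succ, totD_apply_succ, Tot.sub_apply, Tot.sub_apply, map_sub,
      map_sub, smul_sub]
    abel

lemma alternatingCoface_totD {n : ℤ} (k : ℕ) (s : ℤ) (x : C.Tot n) :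
    C.alternatingCoface k (n - 1 + k) s (C.totD n (n - 1) x k)
      = C.alternatingCoface k (n - 1 + k) s (C.d k (n + k) (n - 1 + k) (x k)) := by
  cases k with
  | zero => rw [totD_apply_zero]
  | succ k =>
    rw [totD_apply_succ, map_add, map_smul, alternatingCoface_alternatingCoface, smul_zero,
      add_zero]

theorem totD_totD {n : ℤ} (x : C.Tot n) : C.totD (n - 1) (n - 1 - 1) (C.totD n (n - 1) x) = 0 := by
  funext k
  cases k with
  | zero => exact (C.totD_apply_zero _ _).trans (by rw [totD_apply_zero, C.d_sq]; rfl)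
  | succ k =>
    show C.totD (n - 1) (n - 1 - 1) (C.totD n (n - 1) x) (k + 1) = 0
    rw [totD_apply_succ, totD_apply_succ, alternatingCoface_totD, map_add, C.d_sq, zero_add,
      map_smul, C.d_alternatingCoface (q := n - 1 + k) (by push_cast; ring) (by push_cast; ring),
      zpow_sub_one₀ (by norm_num), inv_neg_one, mul_neg_one, neg_smul, add_neg_cancel]

structure ToZeroQuasiIso : Prop where
  injective : ∀ (k : ℕ) (q : ℤ) (x : C.X k q), C.IsCycle k q x →
    C.IsBoundary 0 q (C.toZero k q x) → C.IsBoundary k q x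
  surjective : ∀ (k : ℕ) (q : ℤ) (y : C.X 0 q), C.IsCycle 0 q y →
    ∃ x : C.X k q, C.IsCycle k q x ∧ C.IsBoundary 0 q (y - C.toZero k q x)

section TotalCycle

variable {n : ℤ}

/-- What `∂` of the `(k + 1)`-st component of a primitive of `x` must hit once its `k`-th
component is `a`. Components of the primitive are taken in degree `n + (k + 1)` rather than
`(n + 1) + k`, which avoids degree casts. -/
noncomputable def residual (x : C.Tot n) (k : ℕ) (a : C.X k (n + ((k + 1 : ℕ) : ℤ))) :
    C.X (k + 1) (n + ((k + 1 : ℕ) : ℤ)) :=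
  x (k + 1) + (-1 : ℝ) ^ n • C.alternatingCoface k _ _ a

/-- `a` can serve as the `k`-th component of a primitive of `x` that is still extendable: the
next residual is a cycle whose image in `C(0)` bounds. -/
def IsAdmissible (x : C.Tot n) (k : ℕ) (a : C.X k (n + ((k + 1 : ℕ) : ℤ))) : Prop :=
  C.alternatingCoface k (n + k) (n + k) (x k - C.d k _ (n + k) a) = 0 ∧
    C.IsBoundary 0 _ (C.toZero (k + 1) _ (C.residual x k a))

variable {C} {x : C.Tot n}

theorem ToZeroQuasiIso.exists_d_eq (hC : C.ToZeroQuasiIso) {k : ℕ} {p q r : ℤ} (hp : p = q + 1)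
    (hq : q = r + 1) {z : C.X k q} (hz : C.d k q r z = 0) {w : C.X 0 p}
    (hw : C.d 0 p q w = C.toZero k q z) :
    ∃ y : C.X k p, C.d k p q y = z ∧ C.IsBoundary 0 p (C.toZero k p y - w) := by
  subst hp hq
  obtain ⟨y, hy⟩ := hC.injective k _ z ((C.isCycle_iff rfl z).2 hz) ⟨w, hw⟩
  have hyw : C.IsCycle 0 (r + 1 + 1) (C.toZero k _ y - w) := by
    rw [C.isCycle_iff rfl, map_sub, ← C.toZero_d, hy, hw, sub_self]
  obtain ⟨u, hu, hyu⟩ := hC.surjective k _ _ hyw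
  refine ⟨y - u, ?_, ?_⟩
  · rw [map_sub, hy, (C.isCycle_iff rfl u).1 hu, sub_zero]
  · rwa [C.toZero_sub, sub_right_comm]

lemma d_apply_succ_of_totD_eq_zero (hx : C.totD n (n - 1) x = 0) (k : ℕ) :
    C.d (k + 1) (n + ((k + 1 : ℕ) : ℤ)) (n + k) (x (k + 1))
      = -((-1 : ℝ) ^ n • C.alternatingCoface k (n + k) (n + k) (x k)) := by
  have h : C.totD n (n - 1) x (k + 1) = 0 := by rw [hx]; rfl
  rw [totD_apply_succ, show n - 1 + ((k + 1 : ℕ) : ℤ) = n + k by push_cast; ring] at h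
  exact eq_neg_of_add_eq_zero_left h

lemma toZero_eq_d_of_odd (hx : C.totD n (n - 1) x = 0) {k : ℕ} (hk : Odd k) :
    C.toZero k (n + k) (x k) = C.d 0 (n + ((k + 1 : ℕ) : ℤ)) (n + k)
      (-((-1 : ℝ) ^ n • C.toZero (k + 1) _ (x (k + 1)))) := by
  rw [map_neg, map_smul, ← C.toZero_d, d_apply_succ_of_totD_eq_zero hx, C.toZero_neg,
    C.toZero_smul, toZero_alternatingCoface, if_neg (Nat.not_even_iff_odd.2 hk), smul_neg,
    neg_neg, smul_smul, ← zpow_add₀ (by norm_num), Even.neg_one_zpow ⟨n, rfl⟩, one_smul]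

lemma isBoundary_toZero_of_odd (hx : C.totD n (n - 1) x = 0) {k : ℕ} (hk : Odd k) :
    C.IsBoundary 0 (n + k) (C.toZero k (n + k) (x k)) :=
  (C.isBoundary_iff (by push_cast; ring) _).2 ⟨_, (toZero_eq_d_of_odd hx hk).symm⟩

lemma d_residual (hx : C.totD n (n - 1) x = 0) (k : ℕ) (a : C.X k (n + ((k + 1 : ℕ) : ℤ))) :
    C.d (k + 1) _ (n + k) (C.residual x k a)
      = -((-1 : ℝ) ^ n • C.alternatingCoface k (n + k) (n + k) (x k - C.d k _ (n + k) a)) := by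
  rw [residual, map_add, map_smul, d_apply_succ_of_totD_eq_zero hx,
    C.d_alternatingCoface rfl rfl, map_sub, smul_sub]
  abel

lemma toZero_residual (k : ℕ) (a : C.X k (n + ((k + 1 : ℕ) : ℤ))) :
    C.toZero (k + 1) _ (C.residual x k a)
      = C.toZero (k + 1) _ (x (k + 1)) + (-1 : ℝ) ^ n • if Even k then 0 else C.toZero k _ a := by
  rw [residual, toZero_add, toZero_smul, toZero_alternatingCoface]

lemma isAdmissible_zero (hx : C.totD n (n - 1) x = 0) {a : C.X 0 (n + ((0 + 1 : ℕ) : ℤ))}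
    (ha : C.d 0 _ (n + ((0 : ℕ) : ℤ)) a = x 0) : C.IsAdmissible x 0 a := by
  refine ⟨by rw [ha, sub_self, map_zero], ?_⟩
  rw [toZero_residual, if_pos (by decide), smul_zero, add_zero]
  exact isBoundary_toZero_of_odd hx odd_one

lemma alternatingCoface_sub_d_eq_zero {k : ℕ} {a : C.X k (n + ((k + 1 : ℕ) : ℤ))}
    {b : C.X (k + 1) (n + ((k + 1 + 1 : ℕ) : ℤ))} (hb : C.d (k + 1) _ _ b = C.residual x k a) :
    C.alternatingCoface (k + 1) (n + ((k + 1 : ℕ) : ℤ)) (n + ((k + 1 : ℕ) : ℤ))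
      (x (k + 1) - C.d (k + 1) _ _ b) = 0 := by
  rw [hb, residual, sub_add_cancel_left, map_neg, map_smul, alternatingCoface_alternatingCoface,
    smul_zero, neg_zero]

theorem ToZeroQuasiIso.exists_isAdmissible_succ (hC : C.ToZeroQuasiIso)
    (hx : C.totD n (n - 1) x = 0) {k : ℕ} {a : C.X k (n + ((k + 1 : ℕ) : ℤ))}
    (ha : C.IsAdmissible x k a) :
    ∃ b : C.X (k + 1) (n + ((k + 1 + 1 : ℕ) : ℤ)),
      C.d (k + 1) _ _ b = C.residual x k a ∧ C.IsAdmissible x (k + 1) b := by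
  have hcycle : C.d (k + 1) _ (n + k) (C.residual x k a) = 0 := by
    rw [d_residual hx, ha.1, smul_zero, neg_zero]
  rcases Nat.even_or_odd k with hk | hk
  · -- `toZero` kills the residual's coface term, and `x` itself supplies a primitive in `C(0)`
    obtain ⟨b, hb, hbw⟩ := hC.exists_d_eq (by push_cast; ring) (by push_cast; ring) hcycle
      (w := -((-1 : ℝ) ^ n • C.toZero (k + 1 + 1) _ (x (k + 1 + 1))))
      (by rw [toZero_residual, if_pos hk, smul_zero, add_zero, toZero_eq_d_of_odd hx hk.add_one])
    refine ⟨b, hb, alternatingCoface_sub_d_eq_zero hb, ?_⟩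
    convert hbw.smul ((-1 : ℝ) ^ n) using 1
    rw [toZero_residual, if_neg (Nat.not_even_iff_odd.2 hk.add_one), sub_neg_eq_add, smul_add,
      smul_smul, ← zpow_add₀ (by norm_num), Even.neg_one_zpow ⟨n, rfl⟩, one_smul]
    exact add_comm _ _
  · obtain ⟨w, hw⟩ := (C.isBoundary_iff (p := n + ((k + 1 + 1 : ℕ) : ℤ))
      (by push_cast; ring) _).1 ha.2
    obtain ⟨b, hb, -⟩ := hC.exists_d_eq (by push_cast; ring) (by push_cast; ring) hcycle hw
    refine ⟨b, hb, alternatingCoface_sub_d_eq_zero hb, ?_⟩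
    rw [toZero_residual, if_pos hk.add_one, smul_zero, add_zero]
    exact isBoundary_toZero_of_odd hx hk.add_one.add_one

theorem ToZeroQuasiIso.exists_totD_eq (hC : C.ToZeroQuasiIso) {m : ℤ} (hm : n + 1 = m)
    (hx : C.totD n (n - 1) x = 0) (y₀ : C.X 0 (m + ((0 : ℕ) : ℤ)))
    (hy₀ : C.d 0 _ (n + ((0 : ℕ) : ℤ)) y₀ = x 0) :
    ∃ y : C.Tot m, y 0 = y₀ ∧ C.totD m n y = x := by
  subst hm
  have hdeg (k : ℕ) : n + ((k + 1 : ℕ) : ℤ) = n + 1 + k := by push_cast; ring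
  obtain ⟨f, hf₀, hf⟩ := exists_seq_of_forall_exists (α := fun k => C.X k (n + ((k + 1 : ℕ) : ℤ)))
    (C.IsAdmissible x) (fun k a b => C.d (k + 1) _ _ b = C.residual x k a)
    (C.degreeCast (hdeg 0).symm y₀) (isAdmissible_zero hx (by rw [d_degreeCast, hy₀]))
    (fun _ _ ha => hC.exists_isAdmissible_succ hx ha)
  let y : C.Tot (n + 1) := fun k => C.degreeCast (hdeg k) (f k)
  refine ⟨y, by simp [y, hf₀], funext fun k => ?_⟩
  cases k with
  | zero => rw [totD_apply_zero, d_degreeCast, hf₀, d_degreeCast, hy₀]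
  | succ k =>
    rw [totD_apply_succ, d_degreeCast, alternatingCoface_degreeCast, hf k, residual,
      zpow_add_one₀ (by norm_num), mul_neg_one, neg_smul, add_neg_cancel_right]

theorem ToZeroQuasiIso.exists_totD_eq_of_isBoundary (hC : C.ToZeroQuasiIso)
    (hx : C.totD n (n - 1) x = 0) (hx₀ : C.IsBoundary 0 (n + ((0 : ℕ) : ℤ)) (x 0)) :
    ∃ y : C.Tot (n + 1), C.totD (n + 1) n y = x := by
  obtain ⟨y₀, hy₀⟩ := (C.isBoundary_iff (p := n + 1 + ((0 : ℕ) : ℤ)) (by push_cast; ring) _).1 hx₀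
  obtain ⟨y, -, hy⟩ := hC.exists_totD_eq rfl hx y₀ hy₀
  exact ⟨y, hy⟩

/-- Extend `w` by zero to a total chain; its boundary has a primitive vanishing in degree `0`. -/
theorem ToZeroQuasiIso.exists_totD_eq_zero_of_isCycle (hC : C.ToZeroQuasiIso)
    {w : C.X 0 (n + ((0 : ℕ) : ℤ))} (hw : C.IsCycle 0 _ w) :
    ∃ x : C.Tot n, C.totD n (n - 1) x = 0 ∧ x 0 = w := by
  let x₀ : C.Tot n := Pi.single (M := fun k => C.X k (n + k)) 0 w
  have hx₀ : x₀ 0 = w := Pi.single_eq_same (M := fun k => C.X k (n + k)) 0 w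
  obtain ⟨y, hy₀, hy⟩ := hC.exists_totD_eq (sub_add_cancel n 1) (C.totD_totD x₀) 0 (by
    rw [map_zero, totD_apply_zero, hx₀,
      (C.isCycle_iff (r := n - 1 + ((0 : ℕ) : ℤ)) (by push_cast; ring) w).1 hw])
  exact ⟨x₀ - y, by rw [totD_sub, hy, sub_self], by rw [Tot.sub_apply, hy₀, sub_zero, hx₀]⟩

end TotalCycle

end CosimplicialChainComplex

/-- Lemma 6.4.  If for every `k ≥ 0` the chain map `C(k) → C(0)`
induced by the cosimplicial structure is a quasi-isomorphism, then the projection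
`pr₀ : C̃ → C(0)` from the total complex is a quasi-isomorphism. -/
theorem CosimplicialChainComplex.pr_zero_quasiIso (C : CosimplicialChainComplex)
    (hqis_inj : ∀ (k : ℕ) (q : ℤ) (x : C.X k q), C.IsCycle k q x →
      C.IsBoundary 0 q (C.toZero k q x) → C.IsBoundary k q x)
    (hqis_surj : ∀ (k : ℕ) (q : ℤ) (y : C.X 0 q), C.IsCycle 0 q y →
      ∃ x : C.X k q, C.IsCycle k q x ∧ C.IsBoundary 0 q (y - C.toZero k q x)) :
    ∀ n : ℤ,
      (∀ x : C.Tot n, C.totD n (n - 1) x = 0 →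
        C.IsBoundary 0 (n + ((0 : ℕ) : ℤ)) (x 0) →
        ∃ y : C.Tot (n + 1), C.totD (n + 1) n y = x) ∧
      (∀ w : C.X 0 (n + ((0 : ℕ) : ℤ)), C.IsCycle 0 (n + ((0 : ℕ) : ℤ)) w →
        ∃ x : C.Tot n, C.totD n (n - 1) x = 0 ∧
          C.IsBoundary 0 (n + ((0 : ℕ) : ℤ)) (w - x 0)) := by
  have hC : C.ToZeroQuasiIso := ⟨hqis_inj, hqis_surj⟩
  intro n
  refine ⟨fun x hx hx₀ => hC.exists_totD_eq_of_isBoundary hx hx₀, fun w hw => ?_⟩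
  obtain ⟨x, hx, rfl⟩ := hC.exists_totD_eq_zero_of_isCycle hw
  exact ⟨x, hx, by rw [sub_self]; exact C.isBoundary_zero 0 _⟩
end

section
/- Let (Γ, c₀, c₁, …, c_r, t) be a decorated cactus. For any i with 1 ≤ i ≤ r and any flags f, f' ∈ c_i, if λ(f) = λ(f') then f = f'. -/
open scoped Classical

/-- A *decorated cactus* (Definition 8.1 of the paper): a connected ribbon graph `Γ`
of genus `0`, together with cycles `c 0, c 1, …, c r` (orbits of `rot ∘ inv` on the
set of flags) whose disjoint union is the set of flags, such that every pair
`{f, inv f}` meets `c 0` in exactly one flag, and a distinguished tail `tail`.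

* `V` is the (finite) set of vertices, `F` the (finite) set of flags;
* `lam : F → V` assigns to a flag its vertex, `inv` is the involution `ι`
  (whose non-fixed orbits are the edges, and whose fixed points are the tails);
* `rot : F ≃ F` is the ribbon structure `N`, preserving `lam` and acting
  transitively on every fiber of `lam`;
* connectivity is phrased via walks of edges, and genus `0` via
  `#V + #cycles = #edges + 2` (i.e. `2 - 2g = #V - #E + #cycles` with `g = 0`). -/
structure DecoratedCactus (r : ℕ) : Type 1 where
  V : Type
  F : Type
  [finV : Fintype V]
  [finF : Fintype F]
  [decV : DecidableEq V]
  [decF : DecidableEq F]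
  lam : F → V
  inv : F → F
  inv_invol : ∀ f, inv (inv f) = f
  rot : F ≃ F
  lam_rot : ∀ f, lam (rot f) = lam f
  rot_trans : ∀ f g : F, lam f = lam g → ∃ n : ℕ, (fun x => rot x)^[n] f = g
  conn : Nonempty V ∧ ∀ v w : V,
    Relation.ReflTransGen (fun a b => ∃ f, inv f ≠ f ∧ lam f = a ∧ lam (inv f) = b) v w
  genus_zero :
    Fintype.card V +
      (Finset.univ.image (fun f : F =>
        Finset.univ.filter (fun g : F => ∃ n : ℕ, (fun x => rot (inv x))^[n] f = g))).card =
    ((Finset.univ.filter (fun f : F => inv f ≠ f)).image (fun f => s(f, inv f))).card + 2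
  c : Fin (r + 1) → Set F
  c_cycle : ∀ i, ∃ f : F, c i = {g | ∃ n : ℕ, (fun x => rot (inv x))^[n] f = g}
  c_disj : ∀ i j, i ≠ j → c i ∩ c j = ∅
  c_cover : (⋃ i, c i) = (Set.univ : Set F)
  flag_c0 : ∀ f : F, ({f, inv f} ∩ c 0 : Set F).encard = 1
  tail : F
  tail_tail : inv tail = tail

attribute [instance] DecoratedCactus.finV DecoratedCactus.finF
  DecoratedCactus.decV DecoratedCactus.decF

/-! Genus zero, together with the fact that every edge has exactly one flag in `c 0` (and
every tail lies in `c 0`), gives `#V + r = ∑_{i ≥ 1} #c_i + 1`. On the other hand every edge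
`{f, ι f}` with `f ∈ c_i`, `i ≥ 1`, has both endpoints in `λ(c_i)`, because `N ι f ∈ c_i`
lies at the vertex of `ι f`. So the bipartite incidence graph between the vertices and the
blocks `λ(c_i)`, `i ≥ 1`, is connected, whence `#V + r ≤ ∑_{i ≥ 1} #λ(c_i) + 1`. Comparing
the two, `#λ(c_i) = #c_i` for every `i ≥ 1`. -/

open Finset

namespace SimpleGraph

variable {V ι : Type*}

def incidenceGraph (A : ι → Finset V) : SimpleGraph (V ⊕ ι) where
  Adj
    | .inl v, .inr i => v ∈ A i
    | .inr i, .inl v => v ∈ A i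
    | _, _ => False
  symm := ⟨by rintro (v | i) (w | j) h <;> exact h⟩
  loopless := ⟨by rintro (v | i) h <;> exact h⟩

variable (A : ι → Finset V)

@[simp] lemma incidenceGraph_adj_inl_inr (v : V) (i : ι) :
    (incidenceGraph A).Adj (.inl v) (.inr i) ↔ v ∈ A i := .rfl

@[simp] lemma incidenceGraph_adj_inr_inl (v : V) (i : ι) :
    (incidenceGraph A).Adj (.inr i) (.inl v) ↔ v ∈ A i := .rfl

@[simp] lemma not_incidenceGraph_adj_inl_inl (v w : V) :
    ¬(incidenceGraph A).Adj (.inl v) (.inl w) := id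

@[simp] lemma not_incidenceGraph_adj_inr_inr (i j : ι) :
    ¬(incidenceGraph A).Adj (.inr i) (.inr j) := id

lemma incidenceGraph_isBipartiteWith [Fintype V] [Fintype ι] :
    (incidenceGraph A).IsBipartiteWith
      (univ.map .inl : Finset (V ⊕ ι)) (univ.map .inr : Finset (V ⊕ ι)) where
  disjoint := by simp [Set.isCompl_range_inl_range_inr.disjoint]
  mem_of_adj := by rintro (v | i) (w | j) h <;> simp_all

lemma incidenceGraph_neighborFinset_inr [Fintype V] [Fintype ι] (i : ι) :
    (incidenceGraph A).neighborFinset (.inr i) = (A i).map .inl := by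
  ext (v | j) <;> simp

lemma card_edgeFinset_incidenceGraph [Fintype V] [Fintype ι] :
    #(incidenceGraph A).edgeFinset = ∑ i, #(A i) := by
  rw [← isBipartiteWith_sum_degrees_eq_card_edges' (incidenceGraph_isBipartiteWith A), sum_map]
  refine sum_congr rfl fun i _ => ?_
  rw [← card_neighborFinset_eq_degree]
  exact (congrArg card (incidenceGraph_neighborFinset_inr A i)).trans (card_map _)

lemma incidenceGraph_connected [Nonempty V] (hA : ∀ i, (A i).Nonempty)
    (hconn : ∀ v w, Relation.ReflTransGen (fun a b => ∃ i, a ∈ A i ∧ b ∈ A i) v w) :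
    (incidenceGraph A).Connected := by
  have hV (v w : V) : (incidenceGraph A).Reachable (.inl v) (.inl w) := by
    induction hconn v w with
    | refl => rfl
    | tail _ hab ih =>
      obtain ⟨i, ha, hb⟩ := hab
      exact ih.trans (Adj.reachable (v := .inr i) (by simpa using ha) |>.trans
        (Adj.reachable (by simpa using hb)))
  have hι : ∀ x, ∃ v, (incidenceGraph A).Reachable x (.inl v)
    | .inl v => ⟨v, .rfl⟩
    | .inr i => ⟨_, Adj.reachable (by simpa using (hA i).choose_spec)⟩
  refine ⟨fun x y => ?_⟩
  obtain ⟨v, hv⟩ := hι x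
  obtain ⟨w, hw⟩ := hι y
  exact hv.trans ((hV v w).trans hw.symm)

end SimpleGraph

open SimpleGraph in
theorem card_add_card_le_sum_card_add_one {V ι : Type*} [Fintype V] [Fintype ι] [Nonempty V]
    (A : ι → Finset V) (hA : ∀ i, (A i).Nonempty)
    (hconn : ∀ v w, Relation.ReflTransGen (fun a b => ∃ i, a ∈ A i ∧ b ∈ A i) v w) :
    Fintype.card V + Fintype.card ι ≤ ∑ i, #(A i) + 1 := by
  have h := (incidenceGraph_connected A hA hconn).card_vert_le_card_edgeSet_add_one
  rwa [Nat.card_sum, Nat.card_eq_fintype_card, Nat.card_eq_fintype_card, Nat.card_eq_fintype_card,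
    ← edgeFinset_card, card_edgeFinset_incidenceGraph] at h

namespace DecoratedCactus

variable {r : ℕ} (d : DecoratedCactus r)

def facePerm : Equiv.Perm d.F :=
  (Function.Involutive.toPerm d.inv d.inv_invol).trans d.rot

lemma lam_facePerm (f : d.F) : d.lam (d.facePerm f) = d.lam (d.inv f) := d.lam_rot _

lemma exists_iterate_eq_iff_sameCycle (f g : d.F) :
    (∃ n : ℕ, (fun x => d.rot (d.inv x))^[n] f = g) ↔ d.facePerm.SameCycle f g := by
  change (∃ n : ℕ, (⇑d.facePerm)^[n] f = g) ↔ _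
  simp only [Equiv.Perm.iterate_eq_pow]
  exact ⟨fun ⟨n, hn⟩ => ⟨n, by simpa using hn⟩, fun h => h.exists_nat_pow_eq⟩

variable {d}

lemma c_eq_setOf_sameCycle {i : Fin (r + 1)} {f : d.F} (hf : f ∈ d.c i) :
    d.c i = {g | d.facePerm.SameCycle f g} := by
  obtain ⟨f₀, hc⟩ := d.c_cycle i
  simp_rw [exists_iterate_eq_iff_sameCycle] at hc
  rw [hc] at hf ⊢
  ext g
  exact ⟨hf.symm.trans, hf.trans⟩

lemma facePerm_mem_c {i : Fin (r + 1)} {f : d.F} (hf : f ∈ d.c i) : d.facePerm f ∈ d.c i := by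
  rw [c_eq_setOf_sameCycle hf]
  exact Equiv.Perm.sameCycle_apply_right.2 (.refl _ _)

variable (d) in
lemma c_nonempty (i : Fin (r + 1)) : (d.c i).Nonempty := by
  obtain ⟨f, hc⟩ := d.c_cycle i
  exact ⟨f, hc ▸ ⟨0, rfl⟩⟩

variable (d) in
lemma exists_mem_c (f : d.F) : ∃ i, f ∈ d.c i :=
  Set.mem_iUnion.1 (d.c_cover ▸ Set.mem_univ f)

lemma eq_of_mem_c_of_mem_c {i j : Fin (r + 1)} {f : d.F} (hi : f ∈ d.c i) (hj : f ∈ d.c j) :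
    i = j := by
  by_contra hij
  exact (d.c_disj i j hij).subset ⟨hi, hj⟩

lemma exists_mem_c_succ_of_notMem_c_zero {f : d.F} (hf : f ∉ d.c 0) :
    ∃ j : Fin r, f ∈ d.c j.succ := by
  obtain ⟨i, hi⟩ := d.exists_mem_c f
  obtain ⟨j, rfl⟩ := Fin.exists_succ_eq.2 fun h => hf (h ▸ hi)
  exact ⟨j, hi⟩

lemma mem_c_zero_of_inv_eq {f : d.F} (hf : d.inv f = f) : f ∈ d.c 0 := by
  have h := d.flag_c0 f
  rw [hf, Set.pair_eq_singleton] at h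
  by_contra h0
  simp [Set.singleton_inter_eq_empty.2 h0] at h

lemma inv_ne_self_of_notMem_c_zero {f : d.F} (hf : f ∉ d.c 0) : d.inv f ≠ f :=
  fun h => hf (mem_c_zero_of_inv_eq h)

lemma mem_c_zero_iff_inv_notMem {f : d.F} (hf : d.inv f ≠ f) :
    f ∈ d.c 0 ↔ d.inv f ∉ d.c 0 := by
  have h := d.flag_c0 f
  by_cases h₁ : f ∈ d.c 0 <;> by_cases h₂ : d.inv f ∈ d.c 0 <;>
    simp_all [Set.insert_inter_of_notMem, Set.insert_inter_of_mem, Set.encard_pair (Ne.symm hf)]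

variable (d) in
noncomputable def cycleFinset (i : Fin (r + 1)) : Finset d.F := {f | f ∈ d.c i}

@[simp] lemma mem_cycleFinset {i : Fin (r + 1)} {f : d.F} :
    f ∈ d.cycleFinset i ↔ f ∈ d.c i := by
  simp [cycleFinset]

lemma filter_exists_iterate_eq {i : Fin (r + 1)} {f : d.F} (hf : f ∈ d.c i) :
    ({g | ∃ n : ℕ, (fun x => d.rot (d.inv x))^[n] f = g} : Finset d.F) = d.cycleFinset i := by
  ext g
  rw [mem_filter_univ, exists_iterate_eq_iff_sameCycle, mem_cycleFinset,
    c_eq_setOf_sameCycle hf, Set.mem_ofPred_eq]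

variable (d) in
lemma card_cycles :
    #(univ.image fun f : d.F =>
      ({g | ∃ n : ℕ, (fun x => d.rot (d.inv x))^[n] f = g} : Finset d.F)) = r + 1 := by
  have himage : (univ.image fun f : d.F =>
      ({g | ∃ n : ℕ, (fun x => d.rot (d.inv x))^[n] f = g} : Finset d.F)) =
      univ.image d.cycleFinset := by
    ext s
    simp only [mem_image, mem_univ, true_and]
    constructor
    · rintro ⟨f, rfl⟩
      obtain ⟨i, hf⟩ := d.exists_mem_c f
      exact ⟨i, (filter_exists_iterate_eq hf).symm⟩
    · rintro ⟨i, rfl⟩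
      obtain ⟨f, hf⟩ := d.c_nonempty i
      exact ⟨f, filter_exists_iterate_eq hf⟩
  rw [himage, card_image_of_injective _ fun i j hij => ?_, card_univ, Fintype.card_fin]
  obtain ⟨f, hf⟩ := d.c_nonempty i
  exact eq_of_mem_c_of_mem_c hf (mem_cycleFinset.1 (hij ▸ mem_cycleFinset.2 hf))

variable (d) in
lemma card_edges_eq_card_notMem_c_zero :
    #(({f | d.inv f ≠ f} : Finset d.F).image fun f => s(f, d.inv f)) = #{f | f ∉ d.c 0} := by
  have himage : ({f | d.inv f ≠ f} : Finset d.F).image (fun f => s(f, d.inv f)) =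
      ({f | f ∉ d.c 0} : Finset d.F).image (fun f => s(f, d.inv f)) := by
    ext e
    simp only [mem_image, mem_filter_univ]
    constructor
    · rintro ⟨f, hf, rfl⟩
      by_cases h0 : f ∈ d.c 0
      · exact ⟨d.inv f, (mem_c_zero_iff_inv_notMem hf).1 h0, by rw [d.inv_invol, Sym2.eq_swap]⟩
      · exact ⟨f, h0, rfl⟩
    · rintro ⟨f, hf, rfl⟩
      exact ⟨f, inv_ne_self_of_notMem_c_zero hf, rfl⟩
  rw [himage, card_image_of_injOn]
  intro f hf g hg he
  simp only [coe_filter, mem_univ, true_and, Set.mem_ofPred_eq] at hf hg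
  obtain ⟨rfl, -⟩ | ⟨rfl, -⟩ := Sym2.eq_iff.1 he
  · rfl
  · exact (hg ((mem_c_zero_iff_inv_notMem (inv_ne_self_of_notMem_c_zero hg)).2 hf)).elim

variable (d) in
lemma card_notMem_c_zero : #{f | f ∉ d.c 0} = ∑ j : Fin r, #(d.cycleFinset j.succ) := by
  have hunion : ({f | f ∉ d.c 0} : Finset d.F) =
      univ.biUnion fun j : Fin r => d.cycleFinset j.succ := by
    ext f
    simp only [mem_filter_univ, mem_biUnion, mem_univ, true_and, mem_cycleFinset]
    constructor
    · exact exists_mem_c_succ_of_notMem_c_zero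
    · rintro ⟨j, hj⟩ h0
      exact Fin.succ_ne_zero j (eq_of_mem_c_of_mem_c hj h0)
  rw [hunion, card_biUnion fun j _ k _ hjk => disjoint_left.2 fun f hj hk => hjk ?_]
  exact Fin.succ_injective _ (eq_of_mem_c_of_mem_c (mem_cycleFinset.1 hj) (mem_cycleFinset.1 hk))

variable (d) in
lemma card_V_add_eq_sum_card_add_one :
    Fintype.card d.V + r = ∑ j : Fin r, #(d.cycleFinset j.succ) + 1 := by
  have h := d.genus_zero
  rw [card_cycles, card_edges_eq_card_notMem_c_zero, card_notMem_c_zero] at h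
  omega

lemma lam_inv_mem_image {i : Fin (r + 1)} {f : d.F} (hf : f ∈ d.c i) :
    d.lam (d.inv f) ∈ (d.cycleFinset i).image d.lam :=
  mem_image.2 ⟨_, mem_cycleFinset.2 (facePerm_mem_c hf), lam_facePerm d f⟩

lemma exists_lam_mem_image_of_inv_ne {f : d.F} (hf : d.inv f ≠ f) :
    ∃ j : Fin r, d.lam f ∈ (d.cycleFinset j.succ).image d.lam ∧
      d.lam (d.inv f) ∈ (d.cycleFinset j.succ).image d.lam := by
  have of_notMem_c_zero (g : d.F) (hg : g ∉ d.c 0) : ∃ j : Fin r,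
      d.lam g ∈ (d.cycleFinset j.succ).image d.lam ∧
        d.lam (d.inv g) ∈ (d.cycleFinset j.succ).image d.lam := by
    obtain ⟨j, hj⟩ := exists_mem_c_succ_of_notMem_c_zero hg
    exact ⟨j, mem_image_of_mem _ (mem_cycleFinset.2 hj), lam_inv_mem_image hj⟩
  by_cases h0 : f ∈ d.c 0
  · obtain ⟨j, h₁, h₂⟩ := of_notMem_c_zero _ ((mem_c_zero_iff_inv_notMem hf).1 h0)
    exact ⟨j, d.inv_invol f ▸ h₂, h₁⟩
  · exact of_notMem_c_zero f h0

variable (d) in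
lemma card_V_add_le_sum_card_image_add_one :
    Fintype.card d.V + r ≤ ∑ j : Fin r, #((d.cycleFinset j.succ).image d.lam) + 1 := by
  have : Nonempty d.V := d.conn.1
  have hA (j : Fin r) : ((d.cycleFinset j.succ).image d.lam).Nonempty :=
    (d.c_nonempty j.succ).elim fun f hf =>
      ⟨d.lam f, mem_image_of_mem _ (mem_cycleFinset.2 hf)⟩
  have hconn (v w : d.V) := Relation.ReflTransGen.mono
    (fun _ _ ⟨f, hf, ha, hb⟩ => ha ▸ hb ▸ exists_lam_mem_image_of_inv_ne hf) v w (d.conn.2 v w)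
  have h := card_add_card_le_sum_card_add_one _ hA hconn
  rwa [Fintype.card_fin] at h

lemma injOn_lam_cycleFinset_succ (j : Fin r) : Set.InjOn d.lam (d.cycleFinset j.succ) := by
  have hle (k : Fin r) : #((d.cycleFinset k.succ).image d.lam) ≤ #(d.cycleFinset k.succ) :=
    card_image_le
  have hsum : ∑ k : Fin r, #((d.cycleFinset k.succ).image d.lam) =
      ∑ k : Fin r, #(d.cycleFinset k.succ) :=
    le_antisymm (sum_le_sum fun k _ => hle k) (by
      linarith [card_V_add_eq_sum_card_add_one d, card_V_add_le_sum_card_image_add_one d])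
  exact card_image_iff.1 ((sum_eq_sum_iff_of_le fun k _ => hle k).1 hsum j (mem_univ j))

end DecoratedCactus

/-- Corollary 8.3.  In a decorated cactus, two flags of the same
non-zeroth cycle `c i` (`1 ≤ i ≤ r`) based at the same vertex are equal. -/
theorem DecoratedCactus.eq_of_mem_cycle_of_lam_eq {r : ℕ} (d : DecoratedCactus r)
    (i : Fin (r + 1)) (hi : i ≠ 0) (f f' : d.F)
    (hf : f ∈ d.c i) (hf' : f' ∈ d.c i) (h : d.lam f = d.lam f') : f = f' := by
  obtain ⟨j, rfl⟩ := Fin.exists_succ_eq.2 hi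
  exact d.injOn_lam_cycleFinset_succ j (by simpa using hf) (by simpa using hf') h
end
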